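/- Let f : {-1,1}^n → ℝ be a pseudo-Boolean function with Fourier expansion f(x) = Σ_{I ∈ 𝓕} ŵ(I) χ_I(x) and Fourier width ρ. Then E[f(x)^4] ≤ (2ρ + 1) · (Σ_{I ∈ 𝓕} ŵ(I)^2)^2 - 2ρ · Σ_{I ∈ 𝓕} ŵ(I)^4. -/

import Mathlib

/-!
Write `f² = s + g` with `s = ∑ ŵ(I)²` and `g = ∑_{I ≠ J} ŵ(I) ŵ(J) χ_{I ∆ J}`, so that
`E[f⁴] = s² + 2s E[g] + E[g²]` with `E[g] = 0`. Grouping the terms of `g` by `S = I ∆ J`,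
Parseval gives `E[g²] = ∑_S c_S²`, where `c_S` sums `ŵ(I) ŵ(J)` over the fibre of `S`.
A fibre has at most `2ρ` pairs: for `i ∈ S` the pair is determined by whichever of `I`, `J`
contains `i`. Cauchy–Schwarz on each fibre then bounds `E[g²]` by
`2ρ ∑_{I ≠ J} ŵ(I)² ŵ(J)² = 2ρ (s² - ∑ ŵ(I)⁴)`.
-/

/-- The ±1 value of a Boolean coordinate. -/
noncomputable def sgn (b : Bool) : ℝ := if b then 1 else -1

/-- Expectation of `g` over the uniform distribution on `{-1,1}^n`
(coordinates encoded as `Bool`). -/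
noncomputable def pbExp (n : ℕ) (g : (Fin n → Bool) → ℝ) : ℝ :=
  (∑ x : Fin n → Bool, g x) / 2 ^ n

/-- The character `χ_I(x) = ∏_{i ∈ I} x_i`. -/
noncomputable def chi {n : ℕ} (I : Finset (Fin n)) (x : Fin n → Bool) : ℝ :=
  ∏ i ∈ I, sgn (x i)

open Finset
open scoped symmDiff

section OffDiag

variable {α : Type*} [DecidableEq α]

lemma sum_product_self_eq_sum_add_sum_offDiag {M : Type*} [AddCommMonoid M] (s : Finset α)
    (g : α × α → M) :
    ∑ p ∈ s ×ˢ s, g p = ∑ a ∈ s, g (a, a) + ∑ p ∈ s.offDiag, g p := by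
  rw [← diag_union_offDiag, sum_union (disjoint_diag_offDiag s), diag, sum_map]
  rfl

lemma sq_sum_eq_sum_sq_add_sum_offDiag {R : Type*} [CommSemiring R] (s : Finset α) (f : α → R) :
    (∑ a ∈ s, f a) ^ 2 = ∑ a ∈ s, f a ^ 2 + ∑ p ∈ s.offDiag, f p.1 * f p.2 := by
  simp only [sq, sum_mul_sum, ← sum_product', sum_product_self_eq_sum_add_sum_offDiag]

lemma card_product_filter_symmDiff_eq_le (𝓕 : Finset (Finset α)) {S : Finset α} {i : α}
    (hi : i ∈ S) : #{p ∈ 𝓕 ×ˢ 𝓕 | p.1 ∆ p.2 = S} ≤ 2 * #{I ∈ 𝓕 | i ∈ I} := by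
  set F := {p ∈ 𝓕 ×ˢ 𝓕 | p.1 ∆ p.2 = S}
  have hmem : ∀ p ∈ F, p.1 ∈ 𝓕 ∧ p.2 ∈ 𝓕 ∧ p.1 ∆ p.2 = S := by
    intro p hp
    simpa [F, and_assoc] using hp
  have hfst : Set.InjOn Prod.fst (F : Set (Finset α × Finset α)) := fun p hp q hq h =>
    Prod.ext h <| symmDiff_right_injective p.1 <| show p.1 ∆ p.2 = p.1 ∆ q.2 by
      rw [(hmem p hp).2.2, h, (hmem q hq).2.2]
  have hsnd : Set.InjOn Prod.snd (F : Set (Finset α × Finset α)) := fun p hp q hq h =>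
    Prod.ext (symmDiff_left_injective p.2 <| show p.1 ∆ p.2 = q.1 ∆ p.2 by
      rw [(hmem p hp).2.2, h, (hmem q hq).2.2]) h
  have hcover : F ⊆ {p ∈ F | i ∈ p.1} ∪ {p ∈ F | i ∈ p.2} := by
    intro p hp
    have : i ∈ p.1 ∆ p.2 := (hmem p hp).2.2 ▸ hi
    rw [mem_symmDiff] at this
    rcases this with ⟨h, -⟩ | ⟨h, -⟩ <;> simp [hp, h]
  calc #F ≤ #{p ∈ F | i ∈ p.1} + #{p ∈ F | i ∈ p.2} :=
        (card_le_card hcover).trans (card_union_le _ _)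
    _ ≤ #{I ∈ 𝓕 | i ∈ I} + #{I ∈ 𝓕 | i ∈ I} := by
        gcongr
        · refine card_le_card_of_injOn Prod.fst (fun p hp => ?_)
            (hfst.mono (coe_subset.2 (filter_subset _ _)))
          rw [mem_coe, mem_filter] at hp ⊢
          exact ⟨(hmem p hp.1).1, hp.2⟩
        · refine card_le_card_of_injOn Prod.snd (fun p hp => ?_)
            (hsnd.mono (coe_subset.2 (filter_subset _ _)))
          rw [mem_coe, mem_filter] at hp ⊢
          exact ⟨(hmem p hp.1).2.1, hp.2⟩
    _ = 2 * #{I ∈ 𝓕 | i ∈ I} := (two_mul _).symm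

lemma card_offDiag_filter_symmDiff_eq_le {𝓕 : Finset (Finset α)} {ρ : ℕ}
    (hρ : ∀ i, #{I ∈ 𝓕 | i ∈ I} ≤ ρ) (S : Finset α) :
    #{p ∈ 𝓕.offDiag | p.1 ∆ p.2 = S} ≤ 2 * ρ := by
  rcases S.eq_empty_or_nonempty with rfl | ⟨i, hi⟩
  · refine (card_eq_zero.2 (filter_eq_empty_iff.2 fun p hp => ?_)).trans_le (Nat.zero_le _)
    rw [symmDiff_eq_empty]
    exact (mem_offDiag.1 hp).2.2
  · calc #{p ∈ 𝓕.offDiag | p.1 ∆ p.2 = S}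
        ≤ #{p ∈ 𝓕 ×ˢ 𝓕 | p.1 ∆ p.2 = S} := by
          gcongr
          rw [← diag_union_offDiag]
          exact subset_union_right
      _ ≤ 2 * ρ := (card_product_filter_symmDiff_eq_le 𝓕 hi).trans (by gcongr; exact hρ i)

end OffDiag

lemma sum_sq_sum_fiberwise_le {ι κ R : Type*} [DecidableEq κ] [CommRing R] [LinearOrder R]
    [IsStrictOrderedRing R] (s : Finset ι) (g : ι → κ) (f : ι → R) {m : ℕ}
    (hm : ∀ k, #{i ∈ s | g i = k} ≤ m) :
    ∑ k ∈ s.image g, (∑ i ∈ s with g i = k, f i) ^ 2 ≤ m * ∑ i ∈ s, f i ^ 2 := by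
  calc ∑ k ∈ s.image g, (∑ i ∈ s with g i = k, f i) ^ 2
      ≤ ∑ k ∈ s.image g, (m : R) * ∑ i ∈ s with g i = k, f i ^ 2 := by
        refine sum_le_sum fun k _ => sq_sum_le_card_mul_sum_sq.trans ?_
        exact mul_le_mul_of_nonneg_right (mod_cast hm k) (sum_nonneg fun i _ => sq_nonneg _)
    _ = m * ∑ i ∈ s, f i ^ 2 := by
        rw [← mul_sum, sum_fiberwise_of_maps_to fun i hi => mem_image_of_mem g hi]

section Fourier

variable {n : ℕ}

lemma sgn_mul_self (b : Bool) : sgn b * sgn b = 1 := by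
  cases b <;> simp [sgn]

lemma chi_eq_prod_univ (I : Finset (Fin n)) (x : Fin n → Bool) :
    chi I x = ∏ i, if i ∈ I then sgn (x i) else 1 := by
  rw [chi, prod_ite_mem, univ_inter]

lemma chi_mul_chi (I J : Finset (Fin n)) (x : Fin n → Bool) :
    chi I x * chi J x = chi (I ∆ J) x := by
  simp only [chi_eq_prod_univ, ← prod_mul_distrib]
  refine prod_congr rfl fun i _ => ?_
  by_cases hI : i ∈ I <;> by_cases hJ : i ∈ J <;> simp [hI, hJ, mem_symmDiff, sgn_mul_self]

lemma chi_mul_self (I : Finset (Fin n)) (x : Fin n → Bool) : chi I x * chi I x = 1 := by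
  rw [chi_mul_chi, symmDiff_self, bot_eq_empty, chi, prod_empty]

lemma pbExp_add (g h : (Fin n → Bool) → ℝ) :
    pbExp n (fun x => g x + h x) = pbExp n g + pbExp n h := by
  simp only [pbExp, sum_add_distrib, add_div]

lemma pbExp_const_mul (c : ℝ) (g : (Fin n → Bool) → ℝ) :
    pbExp n (fun x => c * g x) = c * pbExp n g := by
  simp only [pbExp, ← mul_sum, mul_div_assoc]

lemma pbExp_const (c : ℝ) : pbExp n (fun _ => c) = c := by
  simp [pbExp]

lemma pbExp_sum {ι : Type*} (s : Finset ι) (g : ι → (Fin n → Bool) → ℝ) :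
    pbExp n (fun x => ∑ i ∈ s, g i x) = ∑ i ∈ s, pbExp n (g i) := by
  simp only [pbExp, ← sum_div]
  rw [sum_comm]

lemma pbExp_chi (S : Finset (Fin n)) : pbExp n (chi S) = if S = ∅ then 1 else 0 := by
  split_ifs with hS
  · simp [hS, chi, pbExp]
  · obtain ⟨i, hi⟩ := nonempty_iff_ne_empty.2 hS
    have hfactor :
        ∑ x : Fin n → Bool, chi S x = ∏ j, ∑ b : Bool, if j ∈ S then sgn b else 1 := by
      rw [prod_univ_sum, ← Fintype.piFinset_univ]
      exact sum_congr rfl fun x _ => chi_eq_prod_univ S x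
    rw [pbExp, hfactor, prod_eq_zero (mem_univ i) (by simp [hi, sgn]), zero_div]

lemma pbExp_chi_mul_chi (S U : Finset (Fin n)) :
    pbExp n (fun x => chi S x * chi U x) = if S = U then 1 else 0 := by
  simp only [chi_mul_chi, pbExp_chi, symmDiff_eq_empty]

lemma pbExp_sq_sum_mul_chi (T : Finset (Finset (Fin n))) (c : Finset (Fin n) → ℝ) :
    pbExp n (fun x => (∑ S ∈ T, c S * chi S x) ^ 2) = ∑ S ∈ T, c S ^ 2 := by
  have hexpand : ∀ x, (∑ S ∈ T, c S * chi S x) ^ 2 =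
      ∑ S ∈ T, ∑ U ∈ T, c S * c U * (chi S x * chi U x) := fun x => by
    rw [sq, sum_mul_sum]
    exact sum_congr rfl fun S _ => sum_congr rfl fun U _ => by ring
  simp only [hexpand, pbExp_sum, pbExp_const_mul, pbExp_chi_mul_chi, mul_ite, mul_one, mul_zero,
    sum_ite_eq, sq]
  exact sum_congr rfl fun S hS => by rw [if_pos hS]

variable {ι : Type*} (s : Finset ι) (a : ι → ℝ) (d : ι → Finset (Fin n))

lemma sum_mul_chi_eq_sum_image (x : Fin n → Bool) :
    ∑ i ∈ s, a i * chi (d i) x =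
      ∑ S ∈ s.image d, (∑ i ∈ s with d i = S, a i) * chi S x := by
  rw [← sum_fiberwise_of_maps_to fun i hi => mem_image_of_mem d hi]
  refine sum_congr rfl fun S _ => ?_
  rw [sum_mul]
  exact sum_congr rfl fun i hi => by rw [(mem_filter.1 hi).2]

lemma pbExp_sum_mul_chi :
    pbExp n (fun x => ∑ i ∈ s, a i * chi (d i) x) = ∑ i ∈ s with d i = ∅, a i := by
  simp only [pbExp_sum, pbExp_const_mul, pbExp_chi, mul_ite, mul_one, mul_zero, sum_filter]

lemma pbExp_sq_sum_mul_chi_eq_sum_image :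
    pbExp n (fun x => (∑ i ∈ s, a i * chi (d i) x) ^ 2) =
      ∑ S ∈ s.image d, (∑ i ∈ s with d i = S, a i) ^ 2 := by
  simp only [sum_mul_chi_eq_sum_image s a d]
  exact pbExp_sq_sum_mul_chi _ _

lemma sq_sum_mul_chi (𝓕 : Finset (Finset (Fin n))) (w : Finset (Fin n) → ℝ)
    (x : Fin n → Bool) :
    (∑ I ∈ 𝓕, w I * chi I x) ^ 2 =
      ∑ I ∈ 𝓕, w I ^ 2 + ∑ p ∈ 𝓕.offDiag, w p.1 * w p.2 * chi (p.1 ∆ p.2) x := by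
  rw [sq_sum_eq_sum_sq_add_sum_offDiag]
  congr 1
  · exact sum_congr rfl fun I _ => by rw [mul_pow, sq (chi I x), chi_mul_self, mul_one]
  · exact sum_congr rfl fun p _ => by rw [← chi_mul_chi]; ring

end Fourier

theorem fourth_moment_width_bound_general (n ρ : ℕ)
    (𝓕 : Finset (Finset (Fin n)))
    (w : Finset (Fin n) → ℝ)
    (f : (Fin n → Bool) → ℝ) (hf : ∀ x, f x = ∑ I ∈ 𝓕, w I * chi I x)
    (hρ : ∀ i : Fin n, (𝓕.filter (fun I => i ∈ I)).card ≤ ρ) :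
    pbExp n (fun x => f x ^ 4) ≤
      (2 * ρ + 1 : ℝ) * (∑ I ∈ 𝓕, w I ^ 2) ^ 2 - (2 * ρ : ℝ) * ∑ I ∈ 𝓕, w I ^ 4 := by
  set s := ∑ I ∈ 𝓕, w I ^ 2
  set g : (Fin n → Bool) → ℝ := fun x =>
    ∑ p ∈ 𝓕.offDiag, w p.1 * w p.2 * chi (p.1 ∆ p.2) x
  have hf4 : (fun x => f x ^ 4) = fun x => s ^ 2 + (2 * s * g x + g x ^ 2) := by
    funext x
    rw [show f x ^ 4 = (f x ^ 2) ^ 2 by ring, hf, sq_sum_mul_chi]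
    ring
  have hg_mean : pbExp n g = 0 := by
    refine (pbExp_sum_mul_chi _ _ _).trans (sum_eq_zero fun p hp => ?_)
    rw [mem_filter, mem_offDiag, symmDiff_eq_empty] at hp
    exact absurd hp.2 hp.1.2.2
  have hg_sq : pbExp n (fun x => g x ^ 2) ≤ 2 * ρ * (s ^ 2 - ∑ I ∈ 𝓕, w I ^ 4) := by
    have hsum : ∑ p ∈ 𝓕.offDiag, (w p.1 * w p.2) ^ 2 = s ^ 2 - ∑ I ∈ 𝓕, w I ^ 4 := by
      simp only [s, sq_sum_eq_sum_sq_add_sum_offDiag 𝓕 (fun I => w I ^ 2), mul_pow, ← pow_mul]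
      ring
    rw [pbExp_sq_sum_mul_chi_eq_sum_image, ← hsum]
    exact_mod_cast sum_sq_sum_fiberwise_le _ _ (fun p => w p.1 * w p.2)
      (card_offDiag_filter_symmDiff_eq_le hρ)
  rw [hf4, pbExp_add, pbExp_const, pbExp_add, pbExp_const_mul, hg_mean]
  linarith

/-- If `f : {-1,1}^n → ℝ` has Fourier expansion `f = ∑_{I ∈ 𝓕} ŵ(I) χ_I` and Fourier width
`ρ`, then `E[f(x)^4] ≤ (2ρ + 1) (∑_{I ∈ 𝓕} ŵ(I)^2)^2 - 2ρ ∑_{I ∈ 𝓕} ŵ(I)^4`. -/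
theorem fourth_moment_width_bound (n ρ : ℕ)
    (𝓕 : Finset (Finset (Fin n)))
    (w : Finset (Fin n) → ℝ) (hw : ∀ I ∈ 𝓕, w I ≠ 0)
    (f : (Fin n → Bool) → ℝ) (hf : ∀ x, f x = ∑ I ∈ 𝓕, w I * chi I x)
    (hρ : ∀ i : Fin n, (𝓕.filter (fun I => i ∈ I)).card ≤ ρ) :
    pbExp n (fun x => f x ^ 4) ≤
      (2 * ρ + 1 : ℝ) * (∑ I ∈ 𝓕, w I ^ 2) ^ 2 - (2 * ρ : ℝ) * ∑ I ∈ 𝓕, w I ^ 4 :=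
  fourth_moment_width_bound_general n ρ 𝓕 w f hf hρ
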